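/- arXiv:1509.07042 — 2 statements merged into one kernel-verified Lean document; each statement's English description precedes it below -/
import Mathlib

section
/- Let G be an abelian group and φ : G → G an injective group homomorphism such that the quotient group G/φ(G) is finite. Then for every n ≥ 1 the quotient G/φⁿ(G) is finite and its cardinality equals |G/φ(G)|ⁿ. -/
theorem MonoidHom.index_range_comp_of_injective {G H K : Type*} [Group G] [Group H] [Group K]
    {g : H →* K} (hg : Function.Injective g) (f : G →* H) :
    (g.comp f).range.index = f.range.index * g.range.index := by
  rw [MonoidHom.range_comp, f.range.index_map_of_injective hg]

theorem Monoid.End.index_range_pow {G : Type*} [Group G] {φ : Monoid.End G}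
    (hφ : Function.Injective φ) (n : ℕ) :
    (MonoidHom.range ((φ ^ n : Monoid.End G) : G →* G)).index =
      (MonoidHom.range (φ : G →* G)).index ^ n := by
  induction n with
  | zero =>
    rw [pow_zero, pow_zero]
    exact Subgroup.index_eq_one.mpr (MonoidHom.range_eq_top_of_surjective _ Function.surjective_id)
  | succ n ih =>
    rw [pow_succ', pow_succ, ← ih]
    exact MonoidHom.index_range_comp_of_injective hφ (φ ^ n)

/-- Let `G` be an abelian group and `φ : G → G` an injective group
homomorphism such that `G ⧸ φ(G)` is finite.  Then for every `n ≥ 1` the quotient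
`G ⧸ φⁿ(G)` is finite and its cardinality equals `|G ⧸ φ(G)|ⁿ`. -/
theorem statement2 {G : Type*} [CommGroup G] (φ : Monoid.End G)
    (hφinj : Function.Injective φ)
    (hfin : Finite (G ⧸ MonoidHom.range (φ : G →* G))) :
    ∀ n : ℕ, 1 ≤ n →
      Finite (G ⧸ MonoidHom.range ((φ ^ n : Monoid.End G) : G →* G)) ∧
        Nat.card (G ⧸ MonoidHom.range ((φ ^ n : Monoid.End G) : G →* G)) =
          (Nat.card (G ⧸ MonoidHom.range (φ : G →* G))) ^ n := by
  intro n _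
  have hcard := Monoid.End.index_range_pow hφinj n
  have hpos : (MonoidHom.range (φ : G →* G)).index ≠ 0 := Nat.card_pos.ne'
  exact ⟨Nat.finite_of_card_ne_zero (hcard.trans_ne (pow_ne_zero n hpos)), hcard⟩
end

section
/- Let G be an abelian group and φ : G → G an injective group homomorphism such that the quotient group G/φ(G) is finite of cardinality at least 2. Let M be the inverse limit lim←ₙ G/φⁿ(G), realized as the subgroup of the product Πₙ G/φⁿ(G) consisting of sequences compatible with the canonical projections G/φ^{n+1}(G) → G/φⁿ(G), equipped with the subspace topology of the product of the discrete topologies. Then M is homeomorphic to the Cantor space ℕ → {0,1} (an infinite countable product of two-point discrete spaces). -/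
namespace Stmt3

variable {G : Type*} [CommGroup G]

/-- `φ^{n+1}(G) ≤ φⁿ(G)`. -/
lemma range_pow_succ_le (φ : Monoid.End G) (n : ℕ) :
    MonoidHom.range ((φ ^ (n + 1) : Monoid.End G) : G →* G) ≤
      MonoidHom.range ((φ ^ n : Monoid.End G) : G →* G) := by
  rintro y ⟨x, rfl⟩
  exact ⟨φ x, by rw [pow_succ]; rfl⟩

/-- The canonical projection `G ⧸ φ^{n+1}(G) → G ⧸ φⁿ(G)`. -/
noncomputable def transMap (φ : Monoid.End G) (n : ℕ) :
    G ⧸ MonoidHom.range ((φ ^ (n + 1) : Monoid.End G) : G →* G) →*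
      G ⧸ MonoidHom.range ((φ ^ n : Monoid.End G) : G →* G) :=
  QuotientGroup.map _ _ (MonoidHom.id G) (by simpa using range_pow_succ_le φ n)

/-- Each quotient carries the discrete topology. -/
instance (H : Subgroup G) : TopologicalSpace (G ⧸ H) := ⊥

/-- The inverse limit `M = lim←ₙ G ⧸ φⁿ(G)`, realized as the set of sequences in the
product `Πₙ G ⧸ φⁿ(G)` compatible with the canonical projections, with the subspace
topology of the product of the discrete topologies. -/
def InvLimit (φ : Monoid.End G) : Type _ :=
  {x : (n : ℕ) → G ⧸ MonoidHom.range ((φ ^ n : Monoid.End G) : G →* G) //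
    ∀ n : ℕ, transMap φ n (x (n + 1)) = x n}

noncomputable instance (φ : Monoid.End G) : TopologicalSpace (InvLimit φ) :=
  instTopologicalSpaceSubtype

end Stmt3

/-!
Fix representatives of `G ⧸ φ(G)`. Every class in `G ⧸ φⁿ(G)` is represented by a
`φ`-adic expansion `∏_{i<n} φⁱ(aᵢ)` with digits `aᵢ` in `G ⧸ φ(G)`: peel off the digit of
the class modulo `φ(G)` and divide the rest by `φ`. Injectivity of `φ` makes this division
unique, hence the expansion as well. Consequently the digit map `(ℕ → G ⧸ φ(G)) → M` is a
continuous bijection from a compact space onto a Hausdorff one, i.e. a homeomorphism.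

It remains to see that `ℕ → Fin d` is a Cantor space for `d ≥ 2`: writing the digits of a
sequence in the complete binary prefix code `0, 10, …, 1ᵈ⁻²0, 1ᵈ⁻¹` gives a continuous
bijection onto `ℕ → Bool`.
-/

theorem DependsOn.continuous {ι : Type*} {α : ι → Type*} [∀ i, TopologicalSpace (α i)]
    [∀ i, DiscreteTopology (α i)] {β : Type*} [TopologicalSpace β] {f : (Π i, α i) → β}
    {s : Set ι} (hs : s.Finite) (hf : DependsOn f s) : Continuous f := by
  refine continuous_iff_continuousAt.2 fun x => (continuousAt_const (y := f x)).congr ?_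
  filter_upwards [(isOpen_set_pi hs fun i _ => isOpen_discrete {x i}).mem_nhds (by simp)]
    with y hy using hf fun i hi => (hy i hi).symm

namespace PrefixCode

variable {n : ℕ}

-- The codeword of the digit `k : Fin (n + 2)` is `1ᵏ0` for `k ≤ n` and `1ⁿ⁺¹` for `k = n + 1`.
def codeLength (n k : ℕ) : ℕ := min (k + 1) (n + 1)

theorem codeLength_pos (n k : ℕ) : 0 < codeLength n k := by
  unfold codeLength; omega

def encode (a : ℕ → Fin (n + 2)) (m : ℕ) : Bool :=
  if m < codeLength n (a 0) then decide (m < (a 0 : ℕ))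
  else encode (fun i => a (i + 1)) (m - codeLength n (a 0))
termination_by m
decreasing_by have := codeLength_pos n (a 0); omega

theorem encode_eq (a : ℕ → Fin (n + 2)) (m : ℕ) :
    encode a m = if m < codeLength n (a 0) then decide (m < (a 0 : ℕ))
      else encode (fun i => a (i + 1)) (m - codeLength n (a 0)) := by
  rw [encode]

theorem encode_of_lt {a : ℕ → Fin (n + 2)} {m : ℕ} (hm : m < codeLength n (a 0)) :
    encode a m = decide (m < (a 0 : ℕ)) := by
  rw [encode_eq, if_pos hm]

theorem encode_add_codeLength (a : ℕ → Fin (n + 2)) (m : ℕ) :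
    encode a (m + codeLength n (a 0)) = encode (fun i => a (i + 1)) m := by
  rw [encode_eq, if_neg (by omega), Nat.add_sub_cancel]

theorem encode_congr {a a' : ℕ → Fin (n + 2)} {m : ℕ} (h : ∀ i ≤ m, a i = a' i) :
    encode a m = encode a' m := by
  induction m using Nat.strong_induction_on generalizing a a' with
  | _ m ih =>
    rw [encode_eq a, encode_eq a', h 0 m.zero_le]
    split_ifs with hm
    · rfl
    · have := codeLength_pos n (a' 0)
      exact ih _ (by omega) fun i hi => h (i + 1) (by omega)

theorem continuous_encode : Continuous (encode (n := n)) :=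
  continuous_pi fun m => DependsOn.continuous (Set.finite_Iic m) fun _ _ h => encode_congr h

theorem exists_leadingOnes (b : ℕ → Bool) : ∃ t, t = n + 1 ∨ b t = false := ⟨_, Or.inl rfl⟩

/-- The number of leading `true`s of `b`, capped at `n + 1`. -/
def firstDigit (n : ℕ) (b : ℕ → Bool) : Fin (n + 2) :=
  ⟨Nat.find (exists_leadingOnes (n := n) b), Nat.lt_succ_of_le (Nat.find_le (Or.inl rfl))⟩

theorem apply_of_lt_codeLength_firstDigit (b : ℕ → Bool) {m : ℕ}
    (hm : m < codeLength n (firstDigit n b)) : b m = decide (m < (firstDigit n b : ℕ)) := by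
  have hfind : (firstDigit n b : ℕ) = Nat.find (exists_leadingOnes (n := n) b) := rfl
  unfold codeLength at hm
  rw [hfind] at hm ⊢
  rcases (Nat.lt_succ_iff.1 (lt_of_lt_of_le hm (min_le_left _ _))).lt_or_eq with hlt | rfl
  · have := Nat.find_min _ hlt
    simp_all
  · have := (Nat.find_spec (exists_leadingOnes (n := n) b)).resolve_left (by omega)
    simp_all

theorem firstDigit_eq {b : ℕ → Bool} {k : Fin (n + 2)}
    (h : ∀ m < codeLength n k, b m = decide (m < (k : ℕ))) : firstDigit n b = k := by
  have hk := k.isLt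
  unfold codeLength at h
  refine Fin.ext ((Nat.find_eq_iff _).2 ⟨?_, fun s hs => ?_⟩)
  · by_cases hkn : (k : ℕ) = n + 1
    · exact Or.inl hkn
    · exact Or.inr (by simpa using h k (by omega))
  · simpa [hs, show s ≠ n + 1 by omega] using h s (by omega)

def decode (n : ℕ) (b : ℕ → Bool) : ℕ → Fin (n + 2)
  | 0 => firstDigit n b
  | k + 1 => decode n (fun i => b (i + codeLength n (firstDigit n b))) k

theorem decode_encode (a : ℕ → Fin (n + 2)) : decode n (encode a) = a := by
  funext k
  induction k generalizing a with
  | zero => exact firstDigit_eq fun m hm => encode_of_lt hm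
  | succ k ih =>
    have hfirst : firstDigit n (encode a) = a 0 := firstDigit_eq fun m hm => encode_of_lt hm
    simp only [decode, hfirst, encode_add_codeLength]
    exact ih _

theorem encode_decode (b : ℕ → Bool) : encode (decode n b) = b := by
  funext m
  induction m using Nat.strong_induction_on generalizing b with
  | _ m ih =>
    rw [encode_eq]
    split_ifs with hm
    · exact (apply_of_lt_codeLength_firstDigit b hm).symm
    · have hm' : codeLength n (firstDigit n b) ≤ m := not_lt.1 hm
      calc encode (decode n (fun i => b (i + codeLength n (firstDigit n b))))
            (m - codeLength n (firstDigit n b))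
          = b (m - codeLength n (firstDigit n b) + codeLength n (firstDigit n b)) :=
            ih _ (by have := codeLength_pos n (firstDigit n b); omega) _
        _ = b m := by rw [Nat.sub_add_cancel hm']

def encodeEquiv (n : ℕ) : (ℕ → Fin (n + 2)) ≃ (ℕ → Bool) where
  toFun := encode
  invFun := decode n
  left_inv := decode_encode
  right_inv := encode_decode

def homeomorph (n : ℕ) : (ℕ → Fin (n + 2)) ≃ₜ (ℕ → Bool) :=
  continuous_encode.homeoOfEquivCompactToT2 (f := encodeEquiv n)

end PrefixCode

namespace Stmt3

open Function

variable {G : Type*} [CommGroup G] (φ : Monoid.End G)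

abbrev powRange (n : ℕ) : Subgroup G := MonoidHom.range ((φ ^ n : Monoid.End G) : G →* G)

instance (H : Subgroup G) : DiscreteTopology (G ⧸ H) := ⟨rfl⟩

instance : T2Space (InvLimit φ) := by unfold InvLimit; infer_instance

theorem mk_eq_mk_of_le {H K : Subgroup G} (hHK : H ≤ K) {x y : G}
    (h : (x : G ⧸ H) = y) : (x : G ⧸ K) = y :=
  QuotientGroup.eq.2 (hHK (QuotientGroup.eq.1 h))

theorem powRange_antitone : Antitone (powRange φ) :=
  antitone_nat_of_succ_le (range_pow_succ_le φ)

theorem powRange_succ_le_range (n : ℕ) : powRange φ (n + 1) ≤ (φ : G →* G).range := by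
  rintro _ ⟨x, rfl⟩
  exact ⟨(φ ^ n) x, by rw [pow_succ']; rfl⟩

theorem pow_succ_apply (n : ℕ) (x : G) : (φ ^ (n + 1)) x = φ ((φ ^ n) x) := by
  rw [pow_succ']; rfl

theorem mk_pow_apply_eq_one (n : ℕ) (x : G) : ((φ ^ n) x : G ⧸ powRange φ n) = 1 :=
  (QuotientGroup.eq_one_iff _).2 ⟨x, rfl⟩

theorem mk_map_eq_one (x : G) : (φ x : G ⧸ (φ : G →* G).range) = 1 :=
  (QuotientGroup.eq_one_iff _).2 ⟨x, rfl⟩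

theorem mk_map_eq_mk_map {n : ℕ} {x y : G} (h : (x : G ⧸ powRange φ n) = y) :
    (φ x : G ⧸ powRange φ (n + 1)) = φ y := by
  obtain ⟨z, hz : (φ ^ n) z = x⁻¹ * y⟩ := QuotientGroup.eq.1 h
  refine QuotientGroup.eq.2 ⟨z, ?_⟩
  show (φ ^ (n + 1)) z = (φ x)⁻¹ * φ y
  rw [pow_succ_apply, hz, map_mul, map_inv]

theorem mk_eq_mk_of_map {n : ℕ} (hφ : Injective φ) {x y : G}
    (h : (φ x : G ⧸ powRange φ (n + 1)) = φ y) : (x : G ⧸ powRange φ n) = y := by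
  obtain ⟨z, hz : (φ ^ (n + 1)) z = (φ x)⁻¹ * φ y⟩ := QuotientGroup.eq.1 h
  refine QuotientGroup.eq.2 ⟨z, hφ ?_⟩
  show φ ((φ ^ n) z) = φ (x⁻¹ * y)
  rw [← pow_succ_apply, hz, map_mul, map_inv]

theorem transMap_mk (n : ℕ) (x : G) : transMap φ n x = x := rfl

theorem InvLimit.mk_eq_of_le (x : InvLimit φ) {m n : ℕ} (hmn : m ≤ n) {g : G}
    (hg : (g : G ⧸ powRange φ n) = x.1 n) : (g : G ⧸ powRange φ m) = x.1 m := by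
  induction n, hmn using Nat.le_induction with
  | base => exact hg
  | succ n _ ih => exact ih (by rw [← x.2 n, ← hg, transMap_mk])

noncomputable section

def partialExpansion (a : ℕ → G ⧸ (φ : G →* G).range) (n : ℕ) : G :=
  ∏ i ∈ Finset.range n, (φ ^ i) (a i).out

theorem partialExpansion_succ (a : ℕ → G ⧸ (φ : G →* G).range) (n : ℕ) :
    partialExpansion φ a (n + 1) = partialExpansion φ a n * (φ ^ n) (a n).out :=
  Finset.prod_range_succ _ _

theorem partialExpansion_succ' (a : ℕ → G ⧸ (φ : G →* G).range) (n : ℕ) :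
    partialExpansion φ a (n + 1) = (a 0).out * φ (partialExpansion φ (fun i => a (i + 1)) n) := by
  simp only [partialExpansion, Finset.prod_range_succ', map_prod, pow_succ_apply, pow_zero]
  exact mul_comm _ _

theorem partialExpansion_congr {a a' : ℕ → G ⧸ (φ : G →* G).range} {n : ℕ}
    (h : ∀ i < n, a i = a' i) : partialExpansion φ a n = partialExpansion φ a' n :=
  Finset.prod_congr rfl fun i hi => by rw [h i (Finset.mem_range.1 hi)]

theorem mk_partialExpansion_succ (a : ℕ → G ⧸ (φ : G →* G).range) (n : ℕ) :
    ((partialExpansion φ a (n + 1) : G) : G ⧸ powRange φ n) = partialExpansion φ a n := by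
  rw [partialExpansion_succ, QuotientGroup.mk_mul, mk_pow_apply_eq_one, mul_one]

theorem mk_partialExpansion_of_le (a : ℕ → G ⧸ (φ : G →* G).range) {m n : ℕ} (h : m ≤ n) :
    ((partialExpansion φ a n : G) : G ⧸ powRange φ m) = partialExpansion φ a m := by
  induction n, h using Nat.le_induction with
  | base => rfl
  | succ n hmn ih =>
    exact (mk_eq_mk_of_le (powRange_antitone φ hmn) (mk_partialExpansion_succ φ a n)).trans ih

theorem exists_partialExpansion (n : ℕ) (q : G ⧸ powRange φ n) :
    ∃ a, ((partialExpansion φ a n : G) : G ⧸ powRange φ n) = q := by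
  obtain ⟨g, rfl⟩ := QuotientGroup.mk_surjective q
  induction n generalizing g with
  | zero => exact ⟨fun _ => 1, QuotientGroup.eq.2 ⟨_, by rw [pow_zero]; rfl⟩⟩
  | succ n ih =>
    obtain ⟨h, hh⟩ : ∃ h, φ h = (g : G ⧸ (φ : G →* G).range).out⁻¹ * g :=
      QuotientGroup.eq.1 (QuotientGroup.out_eq' (g : G ⧸ (φ : G →* G).range))
    obtain ⟨a, ha⟩ := ih h
    refine ⟨fun | 0 => g | i + 1 => a i, ?_⟩
    rw [partialExpansion_succ']
    change ((_ * φ (partialExpansion φ a n) : G) : G ⧸ powRange φ (n + 1)) = g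
    rw [QuotientGroup.mk_mul, mk_map_eq_mk_map φ ha, ← QuotientGroup.mk_mul, hh, mul_inv_cancel_left]

theorem eq_of_mk_partialExpansion_eq (hφ : Injective φ) {a a' : ℕ → G ⧸ (φ : G →* G).range}
    {n : ℕ} (h : ((partialExpansion φ a n : G) : G ⧸ powRange φ n) = partialExpansion φ a' n) :
    ∀ i < n, a i = a' i := by
  induction n generalizing a a' with
  | zero => exact fun i hi => absurd hi (Nat.not_lt_zero i)
  | succ n ih =>
    rw [partialExpansion_succ', partialExpansion_succ'] at h
    have h0 : a 0 = a' 0 := by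
      have := mk_eq_mk_of_le (powRange_succ_le_range φ n) h
      rwa [QuotientGroup.mk_mul, QuotientGroup.mk_mul, mk_map_eq_one, mk_map_eq_one, mul_one,
        mul_one, QuotientGroup.out_eq', QuotientGroup.out_eq'] at this
    rw [h0, QuotientGroup.mk_mul, QuotientGroup.mk_mul, mul_right_inj] at h
    have htail := ih (mk_eq_mk_of_map φ hφ h)
    rintro (_ | i) hi
    · exact h0
    · exact htail i (by omega)

namespace InvLimit

def ofDigits (a : ℕ → G ⧸ (φ : G →* G).range) : InvLimit φ :=
  ⟨fun n => ((partialExpansion φ a n : G) : G ⧸ powRange φ n), mk_partialExpansion_succ φ a⟩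

theorem ofDigits_injective (hφ : Injective φ) : Injective (ofDigits φ) := fun _ _ h =>
  funext fun n => eq_of_mk_partialExpansion_eq φ hφ (congrFun (congrArg Subtype.val h) (n + 1)) n
    n.lt_succ_self

theorem ofDigits_surjective (hφ : Injective φ) : Surjective (ofDigits φ) := by
  intro x
  choose D hD using fun n => exists_partialExpansion φ n (x.1 n)
  have hcoherent : ∀ n, ∀ i < n, D (i + 1) i = D n i := by
    intro n i hi
    refine eq_of_mk_partialExpansion_eq φ hφ ?_ i i.lt_succ_self
    calc ((partialExpansion φ (D (i + 1)) (i + 1) : G) : G ⧸ powRange φ (i + 1))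
        _ = x.1 (i + 1) := hD (i + 1)
        _ = partialExpansion φ (D n) n := (mk_eq_of_le φ x hi (hD n)).symm
        _ = partialExpansion φ (D n) (i + 1) := mk_partialExpansion_of_le φ (D n) hi
  exact ⟨fun i => D (i + 1) i, Subtype.ext (funext fun n =>
    (congrArg _ (partialExpansion_congr φ (hcoherent n))).trans (hD n))⟩

theorem continuous_ofDigits : Continuous (ofDigits φ) :=
  (continuous_pi fun n => DependsOn.continuous (Set.finite_Iio n) fun _ _ h =>
    congrArg _ (partialExpansion_congr φ h)).subtype_mk _

def ofDigitsHomeomorph [Finite (G ⧸ (φ : G →* G).range)] (hφ : Injective φ) :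
    (ℕ → G ⧸ (φ : G →* G).range) ≃ₜ InvLimit φ :=
  (continuous_ofDigits φ).homeoOfEquivCompactToT2
    (f := Equiv.ofBijective _ ⟨ofDigits_injective φ hφ, ofDigits_surjective φ hφ⟩)

end InvLimit

end

end Stmt3

open Stmt3 in
theorem statement3 {G : Type*} [CommGroup G] (φ : Monoid.End G)
    (hφinj : Function.Injective φ)
    (hfin : Finite (G ⧸ MonoidHom.range (φ : G →* G)))
    (hcard : 2 ≤ Nat.card (G ⧸ MonoidHom.range (φ : G →* G))) :
    Nonempty (InvLimit φ ≃ₜ (ℕ → Bool)) := by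
  obtain ⟨n, hn⟩ := Nat.exists_eq_add_of_le' hcard
  let digitHomeomorph := (Finite.equivFinOfCardEq hn).toHomeomorphOfDiscrete
  exact ⟨(InvLimit.ofDigitsHomeomorph φ hφinj).symm.trans
    ((Homeomorph.piCongrRight fun _ => digitHomeomorph).trans (PrefixCode.homeomorph n))⟩
end
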